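/- arXiv:1902.03703 — 3 statements merged into one kernel-verified Lean document; each statement's English description precedes it below -/
import Mathlib

section
/- Let W be a unitary operator on a finite-dimensional complex Hilbert space h, let ψ* be a unit vector that is cyclic for W (i.e., the span of {W^k ψ* : k ∈ ℕ} is all of h), let P be the orthogonal projection onto the span of ψ*, and let α ∈ ℝ with α not an integer multiple of π. Then the spectral radius of M := W(1 + (cos α − 1)P) is strictly less than 1. -/
open ContinuousLinearMap
open scoped InnerProductSpace NNReal

/-! If `M v = z • v` with `v ≠ 0` and `p = ⟪ψ, v⟫`, then, `W` being an isometry,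
`‖z‖² ‖v‖² = ‖v‖² - sin² α ‖p‖²`. Hence `‖z‖ < 1` unless `p = 0`. In that case `W v = z • v`, and
unitarity propagates `v ⟂ ψ` to `v ⟂ W ^ k ψ` for every `k`, so cyclicity forces `v = 0`. -/

section InnerProduct

variable {𝕜 E : Type*} [RCLike 𝕜] [NormedAddCommGroup E] [InnerProductSpace 𝕜 E]

theorem eq_zero_of_span_eq_top_of_forall_inner_eq_zero {s : Set E}
    (hs : Submodule.span 𝕜 s = ⊤) {v : E} (hv : ∀ x ∈ s, ⟪x, v⟫_𝕜 = 0) : v = 0 := by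
  have hortho : Submodule.span 𝕜 s ⟂ 𝕜 ∙ v :=
    Submodule.isOrtho_span.mpr fun x hx y hy => by rw [Set.mem_singleton_iff.mp hy]; exact hv x hx
  rwa [hs, Submodule.isOrtho_top_left, Submodule.span_singleton_eq_bot] at hortho

theorem norm_add_smul_inner_smul_sq {ψ : E} (hψ : ‖ψ‖ = 1) (c : ℝ) (v : E) :
    ‖v + ((c : 𝕜) - 1) • ⟪ψ, v⟫_𝕜 • ψ‖ ^ 2 = ‖v‖ ^ 2 + (c ^ 2 - 1) * ‖⟪ψ, v⟫_𝕜‖ ^ 2 := by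
  have hcoe : ((c : 𝕜) - 1) = ((c - 1 : ℝ) : 𝕜) := by push_cast; ring
  rw [@norm_add_sq 𝕜, inner_smul_right, inner_smul_right, ← inner_conj_symm v ψ, RCLike.mul_conj,
    norm_smul, norm_smul, hψ, hcoe, RCLike.norm_ofReal, ← RCLike.ofReal_pow, ← RCLike.ofReal_mul,
    RCLike.ofReal_re, mul_one, mul_pow, sq_abs]
  ring

variable [CompleteSpace E]

theorem inner_pow_apply_eq_zero_of_apply_eq_smul {W : E →L[𝕜] E} (hW : W ∈ unitary (E →L[𝕜] E))
    {z : 𝕜} {v ψ : E} (hv : W v = z • v) (hψv : ⟪ψ, v⟫_𝕜 = 0) (k : ℕ) :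
    ⟪(W ^ k) ψ, v⟫_𝕜 = 0 := by
  rcases eq_or_ne z 0 with rfl | hz
  · rw [zero_smul, ← norm_eq_zero, norm_map_of_mem_unitary hW, norm_eq_zero] at hv
    rw [hv, inner_zero_right]
  induction k with
  | zero => simpa using hψv
  | succ k ih =>
    have h := inner_map_map_of_mem_unitary hW ((W ^ k) ψ) v
    rw [hv, inner_smul_right, ih, ← mul_apply_eq_comp, ← pow_succ'] at h
    exact (mul_eq_zero.mp h).resolve_left hz

theorem norm_lt_one_of_apply_eq_smul {W : E →L[𝕜] E} (hW : W ∈ unitary (E →L[𝕜] E)) {ψ : E}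
    (hψ : ‖ψ‖ = 1) (hcyc : Submodule.span 𝕜 {x | ∃ k : ℕ, x = (W ^ k) ψ} = ⊤) {c : ℝ}
    (hc : c ^ 2 < 1) {z : 𝕜} {v : E} (hv0 : v ≠ 0)
    (hv : (W * (1 + ((c : 𝕜) - 1) • (innerSL 𝕜 ψ).smulRight ψ)) v = z • v) : ‖z‖ < 1 := by
  have happly : (W * (1 + ((c : 𝕜) - 1) • (innerSL 𝕜 ψ).smulRight ψ)) v
      = W (v + ((c : 𝕜) - 1) • ⟪ψ, v⟫_𝕜 • ψ) := by
    simp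
  have hnorm : ‖z‖ ^ 2 * ‖v‖ ^ 2 = ‖v‖ ^ 2 + (c ^ 2 - 1) * ‖⟪ψ, v⟫_𝕜‖ ^ 2 := by
    rw [← mul_pow, ← norm_smul, ← hv, happly, norm_map_of_mem_unitary hW,
      norm_add_smul_inner_smul_sq hψ]
  rcases eq_or_ne ⟪ψ, v⟫_𝕜 0 with hψv | hψv
  · have hWv : W v = z • v := by simpa [hψv] using happly.symm.trans hv
    refine absurd (eq_zero_of_span_eq_top_of_forall_inner_eq_zero hcyc ?_) hv0
    rintro _ ⟨k, rfl⟩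
    exact inner_pow_apply_eq_zero_of_apply_eq_smul hW hWv hψv k
  · have hlt : ‖z‖ ^ 2 * ‖v‖ ^ 2 < 1 * ‖v‖ ^ 2 := by
      have := mul_neg_of_neg_of_pos (sub_neg.mpr hc) (pow_pos (norm_pos_iff.mpr hψv) 2)
      rw [hnorm, one_mul]
      linarith
    exact (sq_lt_one_iff₀ (norm_nonneg z)).mp (lt_of_mul_lt_mul_right hlt (sq_nonneg _))

end InnerProduct

theorem spectralRadius_lt_of_forall_apply_eq_smul {E : Type*} [NormedAddCommGroup E]
    [NormedSpace ℂ E] [FiniteDimensional ℂ E] (T : E →L[ℂ] E) {r : ℝ≥0} (hr : 0 < r)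
    (hT : ∀ (z : ℂ) (v : E), v ≠ 0 → T v = z • v → ‖z‖ < r) : spectralRadius ℂ T < r := by
  rcases subsingleton_or_nontrivial E with hE | hE
  · simpa [spectralRadius, spectrum.of_subsingleton] using hr
  refine spectrum.spectralRadius_lt_of_forall_lt T fun z hz => ?_
  rw [ContinuousLinearMap.spectrum_eq, ← Module.End.hasEigenvalue_iff_mem_spectrum] at hz
  obtain ⟨v, hv⟩ := hz.exists_hasEigenvector
  exact_mod_cast hT z v hv.2 hv.apply_eq_smul

/-- If `W` is unitary on a finite-dimensional complex Hilbert space,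
`ψ` is a unit cyclic vector for `W`, `P` the orthogonal projection onto `span ψ`,
and `α ∈ ℝ \ πℤ`, then `spr (W (1 + (cos α − 1) P)) < 1`. -/
theorem stmt0 {d : ℕ}
    (W : EuclideanSpace ℂ (Fin d) →L[ℂ] EuclideanSpace ℂ (Fin d))
    (hW : W ∈ unitary (EuclideanSpace ℂ (Fin d) →L[ℂ] EuclideanSpace ℂ (Fin d)))
    (ψ : EuclideanSpace ℂ (Fin d)) (hψ : ‖ψ‖ = 1)
    (hcyc : Submodule.span ℂ {x | ∃ k : ℕ, x = (W ^ k) ψ} = ⊤)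
    (α : ℝ) (hα : ∀ k : ℤ, α ≠ k * Real.pi) :
    spectralRadius ℂ
      (W * (1 + (((Real.cos α : ℂ)) - 1) • ((innerSL ℂ ψ).smulRight ψ))) < 1 := by
  have hsin : Real.sin α ≠ 0 := Real.sin_ne_zero_iff.mpr fun k => (hα k).symm
  have hcos : Real.cos α ^ 2 < 1 := by
    rw [Real.cos_sq']
    exact sub_lt_self 1 (sq_pos_of_ne_zero hsin)
  simpa using spectralRadius_lt_of_forall_apply_eq_smul _ one_pos fun z v hv0 hv =>
    norm_lt_one_of_apply_eq_smul hW hψ hcyc hcos hv0 hv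
end

section
/- Let M be a square complex matrix with ‖M‖ ≤ 1 and spectral radius < 1, let W be unitary with M = W(1 + (cos α − 1)P) for a rank-one orthogonal projection P, and let (c_k)_{k∈ℤ} be complex coefficients with c_{−k} = conj(c_k) and Σ_k |c_k| < ∞. Then the double series Σ_{s',t'=1}^∞ c_{s'−t'} sin²α · M^{t'−1} W P W* (M*)^{s'−1} converges absolutely in operator norm and equals c_0·1 + Σ_{ℓ=1}^∞ c_ℓ (M*)^ℓ + Σ_{ℓ=1}^∞ conj(c_ℓ) M^ℓ, i.e. 2 Re F(M*) where F(ζ) = c_0/2 + Σ_{ℓ≥1} c_ℓ ζ^ℓ. -/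
/-! Since `sin²α · W P W* = 1 − M M*`, the double series is `Σ c_{s−t} M^t (1 − M M*) M*^s`.
Grouping its terms by `k = s − t`, each diagonal telescopes: `Σ_m M^m (1 − M M*) M*^m = 1`,
because `‖M^n‖` is summable once the spectral radius is below one (Gelfand's formula). So the
diagonal `k` contributes `c_k M*^k` for `k ≥ 0` and `c_k M^(-k)` for `k < 0`. Summability of
`‖M^n‖` and boundedness of `c` give the absolute convergence that justifies the regrouping. -/

open Filter Topology

theorem summable_norm_pow_of_spectralRadius_lt_one {A : Type*} [NormedRing A]
    [NormedAlgebra ℂ A] [CompleteSpace A] {a : A} (h : spectralRadius ℂ a < 1) :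
    Summable fun n => ‖a ^ n‖ := by
  obtain ⟨r, har, hr1⟩ := ENNReal.lt_iff_exists_nnreal_btwn.mp h
  refine .of_norm_bounded_eventually_nat
    (summable_geometric_of_lt_one r.2 (by exact_mod_cast hr1)) ?_
  filter_upwards [(spectrum.pow_nnnorm_pow_one_div_tendsto_nhds_spectralRadius a).eventually_lt_const
    har, eventually_gt_atTop 0] with n hn hn0
  rw [one_div, ENNReal.rpow_inv_lt_iff (by positivity), ENNReal.rpow_natCast] at hn
  rw [norm_norm]
  exact_mod_cast hn.le

def diffMinEquiv : ℕ × ℕ ≃ ℤ × ℕ where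
  toFun p := ((p.1 : ℤ) - p.2, min p.1 p.2)
  invFun q := (q.2 + q.1.toNat, q.2 + (-q.1).toNat)
  left_inv p := by ext <;> simp only <;> omega
  right_inv q := by ext <;> simp only <;> omega

section PowerSeries

variable {𝕜 A : Type*} [NormedField 𝕜] [NormedRing A] [NormedAlgebra 𝕜 A]

theorem summable_norm_smul_of_norm_le {ι : Type*} {u : ι → 𝕜} {v : ι → A} {K : ℝ}
    (hu : ∀ i, ‖u i‖ ≤ K) (hv : Summable fun i => ‖v i‖) :
    Summable fun i => ‖u i • v i‖ :=
  .of_nonneg_of_le (fun _ => norm_nonneg _)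
    (fun i => (norm_smul_le _ _).trans (mul_le_mul_of_nonneg_right (hu i) (norm_nonneg _)))
    (hv.mul_left K)

variable {a b : A}

theorem summable_norm_pow_mul_mul_pow (ha : Summable fun n => ‖a ^ n‖)
    (hb : Summable fun n => ‖b ^ n‖) (x : A) :
    Summable fun p : ℕ × ℕ => ‖a ^ p.2 * x * b ^ p.1‖ := by
  refine .of_nonneg_of_le (fun _ => norm_nonneg _) (fun p => ?_)
    (((hb.mul_of_nonneg ha (fun _ => norm_nonneg _) (fun _ => norm_nonneg _))).mul_left ‖x‖)
  calc ‖a ^ p.2 * x * b ^ p.1‖ ≤ ‖a ^ p.2‖ * ‖x‖ * ‖b ^ p.1‖ := norm_mul₃_le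
    _ = ‖x‖ * (‖b ^ p.1‖ * ‖a ^ p.2‖) := by ring

theorem summable_norm_smul_pow_mul_mul_pow {c : ℤ → 𝕜} {K : ℝ} (hc : ∀ k, ‖c k‖ ≤ K)
    (ha : Summable fun n => ‖a ^ n‖) (hb : Summable fun n => ‖b ^ n‖) (x : A) :
    Summable fun p : ℕ × ℕ => ‖c (p.1 - p.2) • (a ^ p.2 * x * b ^ p.1)‖ :=
  summable_norm_smul_of_norm_le (fun _ => hc _) (summable_norm_pow_mul_mul_pow ha hb x)

theorem hasSum_pow_mul_one_sub_mul_mul_pow (ha : Summable fun n => ‖a ^ n‖)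
    (hb : Summable fun n => ‖b ^ n‖) :
    HasSum (fun m => a ^ m * (1 - a * b) * b ^ m) 1 := by
  have hdiag : Summable fun m => ‖a ^ m * (1 - a * b) * b ^ m‖ :=
    (summable_norm_pow_mul_mul_pow ha hb (1 - a * b)).comp_injective (i := fun m => (m, m))
      fun m n h => (Prod.ext_iff.mp h).1
  have htele (m : ℕ) : a ^ m * (1 - a * b) * b ^ m = a ^ m * b ^ m - a ^ (m + 1) * b ^ (m + 1) := by
    rw [pow_succ a, pow_succ' b]
    simp only [mul_sub, sub_mul, mul_one, mul_assoc]
  have hlim : Tendsto (fun n => a ^ n * b ^ n) atTop (𝓝 0) := by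
    refine squeeze_zero_norm (fun n => norm_mul_le _ _) ?_
    simpa using ha.tendsto_atTop_zero.mul hb.tendsto_atTop_zero
  rw [hasSum_iff_tendsto_nat_of_summable_norm hdiag]
  simp only [htele, Finset.sum_range_sub' (fun m => a ^ m * b ^ m), pow_zero, mul_one]
  simpa using tendsto_const_nhds.sub hlim

variable [CompleteSpace A]

theorem hasSum_smul_pow_mul_pow_toNat {c : ℤ → 𝕜} {K : ℝ} (hc : ∀ k, ‖c k‖ ≤ K)
    (ha : Summable fun n => ‖a ^ n‖) (hb : Summable fun n => ‖b ^ n‖) :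
    HasSum (fun k : ℤ => c k • (a ^ (-k).toNat * b ^ k.toNat))
      ((∑' n : ℕ, c n • b ^ n) + ∑' n : ℕ, c (-((n : ℤ) + 1)) • a ^ (n + 1)) := by
  refine .of_nat_of_neg_add_one ?_ ?_
  · simpa using (summable_norm_smul_of_norm_le (fun n : ℕ => hc n) hb).of_norm.hasSum
  · have ha' : Summable fun n => ‖a ^ (n + 1)‖ := (summable_nat_add_iff 1).mpr ha
    refine (summable_norm_smul_of_norm_le (fun n : ℕ => hc (-((n : ℤ) + 1))) ha').of_norm.hasSum
      |>.congr_fun fun n => ?_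
    rw [neg_neg, show ((n : ℤ) + 1).toNat = n + 1 by omega,
      show (-((n : ℤ) + 1)).toNat = 0 by omega, pow_zero, mul_one]

theorem hasSum_smul_pow_mul_one_sub_mul_mul_pow {c : ℤ → 𝕜} {K : ℝ} (hc : ∀ k, ‖c k‖ ≤ K)
    (ha : Summable fun n => ‖a ^ n‖) (hb : Summable fun n => ‖b ^ n‖) :
    HasSum (fun p : ℕ × ℕ => c (p.1 - p.2) • (a ^ p.2 * (1 - a * b) * b ^ p.1))
      ((∑' n : ℕ, c n • b ^ n) + ∑' n : ℕ, c (-((n : ℤ) + 1)) • a ^ (n + 1)) := by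
  set f := fun p : ℕ × ℕ => c (p.1 - p.2) • (a ^ p.2 * (1 - a * b) * b ^ p.1)
  have hf : HasSum (f ∘ diffMinEquiv.symm) (∑' p, f p) :=
    diffMinEquiv.symm.hasSum_iff.mpr (summable_norm_smul_pow_mul_mul_pow hc ha hb _).of_norm.hasSum
  have hfibre (k : ℤ) : HasSum (fun m => (f ∘ diffMinEquiv.symm) (k, m))
      (c k • (a ^ (-k).toNat * b ^ k.toNat)) := by
    have h := ((hasSum_pow_mul_one_sub_mul_mul_pow ha hb).mul_left (a ^ (-k).toNat)).mul_right
      (b ^ k.toNat) |>.const_smul (c k)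
    rw [mul_one] at h
    refine h.congr_fun fun m => ?_
    simp only [f, Function.comp_apply, diffMinEquiv, Equiv.coe_fn_symm_mk]
    rw [show ((m + k.toNat : ℕ) : ℤ) - (m + (-k).toNat : ℕ) = k by omega,
      Nat.add_comm m (-k).toNat, pow_add, pow_add]
    simp only [mul_assoc]
  rw [← (hf.prod_fiberwise hfibre).unique (hasSum_smul_pow_mul_pow_toNat hc ha hb)]
  exact (diffMinEquiv.symm.hasSum_iff.mp hf)

end PowerSeries

theorem innerSL_smulRight_eq_starProjection {𝕜 E : Type*} [RCLike 𝕜] [NormedAddCommGroup E]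
    [InnerProductSpace 𝕜 E] {v : E} (hv : ‖v‖ = 1) :
    (innerSL 𝕜 v).smulRight v = (𝕜 ∙ v).starProjection := by
  ext w
  simp [Submodule.starProjection_unit_singleton 𝕜 hv]

theorem sin_sq_smul_unitary_mul_mul_star {A : Type*} [Ring A] [StarRing A] [Algebra ℂ A]
    [StarModule ℂ A] {w p : A} (hw : w ∈ unitary A) (hp : IsStarProjection p) (α : ℝ) :
    (Real.sin α : ℂ) ^ 2 • (w * p * star w) =
      1 - w * (1 + ((Real.cos α : ℂ) - 1) • p) * star (w * (1 + ((Real.cos α : ℂ) - 1) • p)) := by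
  set x := 1 + ((Real.cos α : ℂ) - 1) • p
  have hx : star x = x := by
    rw [star_add, star_one, star_smul, hp.isSelfAdjoint.star_eq, star_sub, star_one,
      Complex.star_def, Complex.conj_ofReal]
  have hsq : x * x = 1 - (Real.sin α : ℂ) ^ 2 • p := by
    simp only [x, mul_add, add_mul, one_mul, mul_one, smul_mul_smul_comm, hp.isIdempotentElem.eq]
    match_scalars
    · ring
    · linear_combination Complex.sin_sq_add_cos_sq (α : ℂ)
  calc (Real.sin α : ℂ) ^ 2 • (w * p * star w) = w * (1 - x * x) * star w := by
        rw [hsq, sub_sub_cancel, mul_smul_comm, smul_mul_assoc]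
    _ = 1 - w * x * star (w * x) := by
        rw [star_mul, hx, mul_sub, sub_mul, mul_one, Unitary.mul_star_self_of_mem hw]
        simp only [mul_assoc]

theorem stmt5_general {d : ℕ}
    (W : EuclideanSpace ℂ (Fin d) →L[ℂ] EuclideanSpace ℂ (Fin d))
    (hW : W ∈ unitary (EuclideanSpace ℂ (Fin d) →L[ℂ] EuclideanSpace ℂ (Fin d)))
    (ψ : EuclideanSpace ℂ (Fin d)) (hψ : ‖ψ‖ = 1)
    (P : EuclideanSpace ℂ (Fin d) →L[ℂ] EuclideanSpace ℂ (Fin d))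
    (hP : P = (innerSL ℂ ψ).smulRight ψ)
    (α : ℝ)
    (M : EuclideanSpace ℂ (Fin d) →L[ℂ] EuclideanSpace ℂ (Fin d))
    (hM : M = W * (1 + (((Real.cos α : ℂ)) - 1) • P))
    (hMspr : spectralRadius ℂ M < 1)
    (c : ℤ → ℂ) (hherm : ∀ k : ℤ, c (-k) = starRingEnd ℂ (c k))
    (hsum : Summable fun k : ℤ => ‖c k‖) :
    Summable (fun p : ℕ × ℕ =>
        ‖c ((p.1 + 1 : ℤ) - (p.2 + 1)) •
          (((Real.sin α : ℂ) ^ 2) • (M ^ p.2 * (W * P * star W) * (star M) ^ p.1))‖) ∧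
      ∑' p : ℕ × ℕ, c ((p.1 + 1 : ℤ) - (p.2 + 1)) •
          (((Real.sin α : ℂ) ^ 2) • (M ^ p.2 * (W * P * star W) * (star M) ^ p.1))
        = c 0 • 1 + (∑' ℓ : ℕ, c (ℓ + 1) • (star M) ^ (ℓ + 1))
            + ∑' ℓ : ℕ, starRingEnd ℂ (c (ℓ + 1)) • M ^ (ℓ + 1) := by
  have hPproj : IsStarProjection P := by
    rw [hP, innerSL_smulRight_eq_starProjection hψ]
    exact isStarProjection_starProjection
  have hterm (s t : ℕ) : ((Real.sin α : ℂ) ^ 2) • (M ^ t * (W * P * star W) * (star M) ^ s) =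
      M ^ t * (1 - M * star M) * (star M) ^ s := by
    rw [hM, ← sin_sq_smul_unitary_mul_mul_star hW hPproj, mul_smul_comm, smul_mul_assoc]
  have hMsum := summable_norm_pow_of_spectralRadius_lt_one hMspr
  have hMstar : Summable fun n => ‖(star M) ^ n‖ :=
    hMsum.congr fun n => by rw [← star_pow]; exact (norm_star (M ^ n)).symm
  have hc (k : ℤ) : ‖c k‖ ≤ ∑' k, ‖c k‖ := hsum.le_tsum k fun _ _ => norm_nonneg _
  have hseries := hasSum_smul_pow_mul_one_sub_mul_mul_pow hc hMsum hMstar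
  simp only [hterm, add_sub_add_right_eq_sub]
  refine ⟨summable_norm_smul_pow_mul_mul_pow hc hMsum hMstar _, hseries.tsum_eq.trans ?_⟩
  have hpos : Summable fun n : ℕ => c n • (star M) ^ n :=
    (summable_norm_smul_of_norm_le (fun n : ℕ => hc n) hMstar).of_norm
  simp only [hpos.tsum_eq_zero_add, hherm, Nat.cast_zero, pow_zero, Nat.cast_succ]

/-- For `M = W(1 + (cos α − 1)P)` with `‖M‖ ≤ 1`, `spr M < 1`,
`P` the rank-one orthogonal projection onto a unit vector `ψ`, and hermitian,
absolutely summable coefficients `(c_k)_{k∈ℤ}`, the double series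
`Σ_{s',t'≥1} c_{s'−t'} sin²α · M^{t'−1} W P W* (M*)^{s'−1}` converges absolutely
in norm and equals `c₀·1 + Σ_{ℓ≥1} c_ℓ (M*)^ℓ + Σ_{ℓ≥1} conj(c_ℓ) M^ℓ`. -/
theorem stmt5 {d : ℕ}
    (W : EuclideanSpace ℂ (Fin d) →L[ℂ] EuclideanSpace ℂ (Fin d))
    (hW : W ∈ unitary (EuclideanSpace ℂ (Fin d) →L[ℂ] EuclideanSpace ℂ (Fin d)))
    (ψ : EuclideanSpace ℂ (Fin d)) (hψ : ‖ψ‖ = 1)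
    (P : EuclideanSpace ℂ (Fin d) →L[ℂ] EuclideanSpace ℂ (Fin d))
    (hP : P = (innerSL ℂ ψ).smulRight ψ)
    (α : ℝ)
    (M : EuclideanSpace ℂ (Fin d) →L[ℂ] EuclideanSpace ℂ (Fin d))
    (hM : M = W * (1 + (((Real.cos α : ℂ)) - 1) • P))
    (hMnorm : ‖M‖ ≤ 1) (hMspr : spectralRadius ℂ M < 1)
    (c : ℤ → ℂ) (hherm : ∀ k : ℤ, c (-k) = starRingEnd ℂ (c k))
    (hsum : Summable fun k : ℤ => ‖c k‖) :
    Summable (fun p : ℕ × ℕ =>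
        ‖c ((p.1 + 1 : ℤ) - (p.2 + 1)) •
          (((Real.sin α : ℂ) ^ 2) • (M ^ p.2 * (W * P * star W) * (star M) ^ p.1))‖) ∧
      ∑' p : ℕ × ℕ, c ((p.1 + 1 : ℤ) - (p.2 + 1)) •
          (((Real.sin α : ℂ) ^ 2) • (M ^ p.2 * (W * P * star W) * (star M) ^ p.1))
        = c 0 • 1 + (∑' ℓ : ℕ, c (ℓ + 1) • (star M) ^ (ℓ + 1))
            + ∑' ℓ : ℕ, starRingEnd ℂ (c (ℓ + 1)) • M ^ (ℓ + 1) :=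
  stmt5_general W hW ψ hψ P hP α M hM hMspr c hherm hsum
end

section
/- Let Σ be a bounded operator on ℓ²(ℤ) ⊗ ℂ^m commuting with S ⊗ U and S ⊗ 1, with U unitary with simple spectrum and eigenvector x_i. Then for every k ∈ ℤ, Σ(δ_k ⊗ x_i) = Σ_{ℓ∈ℤ} ⟨δ₀ ⊗ x_i, Σ(S⊗U)^ℓ(δ₀ ⊗ x_i)⟩ (S*⊗U*)^ℓ (δ_k ⊗ x_i), the sum converging in ℓ²(ℤ)⊗ℂ^m. -/
/-!
Translation invariance under `S ⊗ 1` makes the matrix coefficient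
`⟨δ_p ⊗ x_j, Σ(δ_q ⊗ x_i)⟩` a function of `p - q` alone. Commuting `Σ` with `S ⊗ U` and moving
`S ⊗ U` to the left as its inverse multiplies that coefficient by `conj γ_j · γ_i`, which is
`γ_j⁻¹ γ_i` because `S ⊗ U` is unitary, so it vanishes unless `γ_j = γ_i`, i.e. `j = i`.
Hence every component of `Σ(δ_k ⊗ x_i)` is a multiple of `x_i`, and the expansion of
`Σ(δ_k ⊗ x_i)` in the basis `δ_{k+ℓ} ⊗ x_i` is the stated series, because
`(S ⊗ U)^ℓ (δ₀ ⊗ x_i) = γ_i^ℓ δ_{-ℓ} ⊗ x_i` and `(S* ⊗ U*)^ℓ (δ_k ⊗ x_i) = γ_i^{-ℓ} δ_{k+ℓ} ⊗ x_i`.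
-/

open scoped InnerProductSpace ComplexConjugate

section UnitaryShift

variable {H : Type*} [NormedAddCommGroup H] [InnerProductSpace ℂ H] [CompleteSpace H]

theorem unitary_inv_apply_of_apply_eq_smul (B : unitary (H →L[ℂ] H)) {c : ℂ} (hc : c ≠ 0)
    {u : ℤ → H} (hu : ∀ q, (B : H →L[ℂ] H) (u q) = c • u (q - 1)) (q : ℤ) :
    ((B⁻¹ : unitary (H →L[ℂ] H)) : H →L[ℂ] H) (u q) = c⁻¹ • u (q + 1) := by
  have h := congrArg ((B⁻¹ : unitary (H →L[ℂ] H)) : H →L[ℂ] H) (hu (q + 1))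
  rw [add_sub_cancel_right, map_smul, ← mul_apply_eq_comp, ← MulMemClass.coe_mul,
    inv_mul_cancel, OneMemClass.coe_one, one_apply_eq_self] at h
  rw [h, inv_smul_smul₀ hc]

theorem unitary_zpow_apply_of_apply_eq_smul (B : unitary (H →L[ℂ] H)) {c : ℂ} (hc : c ≠ 0)
    {u : ℤ → H} (hu : ∀ q, (B : H →L[ℂ] H) (u q) = c • u (q - 1)) (n q : ℤ) :
    ((B ^ n : unitary (H →L[ℂ] H)) : H →L[ℂ] H) (u q) = c ^ n • u (q - n) := by
  induction n using Int.induction_on generalizing q with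
  | zero => simp
  | succ n ih =>
    rw [zpow_add_one, MulMemClass.coe_mul, mul_apply_eq_comp, hu, map_smul, ih, smul_smul,
      zpow_add_one₀ hc, mul_comm c]
    congr 2
    ring
  | pred n ih =>
    rw [zpow_sub_one, MulMemClass.coe_mul, mul_apply_eq_comp,
      unitary_inv_apply_of_apply_eq_smul B hc hu, map_smul, ih, smul_smul, zpow_sub_one₀ hc,
      mul_comm c⁻¹]
    congr 2
    ring

theorem norm_eq_one_of_unitary_apply_eq_smul (B : unitary (H →L[ℂ] H)) {c : ℂ} {a b : H}
    (h : (B : H →L[ℂ] H) a = c • b) (hab : ‖a‖ = ‖b‖) (hb : b ≠ 0) : ‖c‖ = 1 := by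
  have hnorm := Unitary.norm_map B a
  rw [h, norm_smul, hab] at hnorm
  exact (mul_eq_right₀ (norm_ne_zero_iff.mpr hb)).mp hnorm

variable (T : H →L[ℂ] H) {u v : ℤ → H}

theorem inner_apply_eq_of_commute_unitary (B : unitary (H →L[ℂ] H)) (hTB : Commute T B)
    {α β : ℂ} (hu : ∀ q, (B : H →L[ℂ] H) (u q) = α • u (q - 1))
    (hv : ∀ p, (B : H →L[ℂ] H) (v p) = β • v (p - 1)) (p q : ℤ) :
    ⟪v p, T (u q)⟫_ℂ = conj β * α * ⟪v (p - 1), T (u (q - 1))⟫_ℂ := by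
  rw [← Unitary.inner_map_map B, ← mul_apply_eq_comp _ T, ← hTB.eq, mul_apply_eq_comp, hu, hv,
    map_smul, inner_smul_left, inner_smul_right, mul_assoc]

theorem inner_apply_add_eq_of_commute_unitary (A : unitary (H →L[ℂ] H)) (hTA : Commute T A)
    (hu : ∀ q, (A : H →L[ℂ] H) (u q) = u (q - 1)) (hv : ∀ p, (A : H →L[ℂ] H) (v p) = v (p - 1))
    (p q n : ℤ) :
    ⟪v (p + n), T (u (q + n))⟫_ℂ = ⟪v p, T (u q)⟫_ℂ := by
  have hperiodic : Function.Periodic (fun n : ℤ => ⟪v (p + n), T (u (q + n))⟫_ℂ) 1 := by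
    intro n
    simpa [← add_assoc] using
      inner_apply_eq_of_commute_unitary T A hTA (α := 1) (β := 1) (by simpa using hu)
        (by simpa using hv) (p + n + 1) (q + n + 1)
  simpa using hperiodic.zsmul_eq n

theorem inner_apply_eq_zero_of_commute_unitary (A B : unitary (H →L[ℂ] H)) (hTA : Commute T A)
    (hTB : Commute T B) (huA : ∀ q, (A : H →L[ℂ] H) (u q) = u (q - 1))
    (hvA : ∀ p, (A : H →L[ℂ] H) (v p) = v (p - 1)) {α β : ℂ} (hβ : ‖β‖ = 1) (hαβ : α ≠ β)
    (huB : ∀ q, (B : H →L[ℂ] H) (u q) = α • u (q - 1))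
    (hvB : ∀ p, (B : H →L[ℂ] H) (v p) = β • v (p - 1)) (p q : ℤ) :
    ⟪v p, T (u q)⟫_ℂ = 0 := by
  have h := inner_apply_eq_of_commute_unitary T B hTB huB hvB p q
  rw [← inner_apply_add_eq_of_commute_unitary T A hTA huA hvA (p - 1) (q - 1) 1,
    sub_add_cancel, sub_add_cancel, ← Complex.inv_eq_conj hβ] at h
  have hβ0 : β ≠ 0 := norm_ne_zero_iff.mp (hβ ▸ one_ne_zero)
  by_contra hne
  exact hαβ ((inv_mul_eq_one₀ hβ0).mp ((mul_eq_right₀ hne).mp h.symm)).symm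

end UnitaryShift

theorem Orthonormal.eq_inner_smul_of_forall_ne_inner_eq_zero {E ι : Type*}
    [NormedAddCommGroup E] [InnerProductSpace ℂ E] [Fintype ι] {x : ι → E} (hx : Orthonormal ℂ x)
    (hcard : Fintype.card ι = Module.finrank ℂ E) {i : ι} {w : E}
    (hw : ∀ j, j ≠ i → ⟪x j, w⟫_ℂ = 0) :
    w = ⟪x i, w⟫_ℂ • x i := by
  have : Nonempty ι := ⟨i⟩
  let b := OrthonormalBasis.mk hx (hx.linearIndependent.span_eq_top_of_card_eq_finrank hcard).ge
  conv_lhs => rw [← b.sum_repr' w]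
  refine Finset.sum_eq_single i (fun j _ hj => ?_) (by simp) |>.trans ?_
  · simp [b, hw j hj]
  · simp [b]

/-- The one-particle Hilbert space of the environment, `ℓ²(ℤ) ⊗ ℂ^m`. -/
noncomputable abbrev EnvSpace (m : ℕ) := lp (fun _ : ℤ => EuclideanSpace ℂ (Fin m)) 2

/-- `B` encodes `S ⊗ U` as an element of the unitary group, so that `ℤ`-indexed powers make
sense and `(S* ⊗ U*)^ℓ = (B⁻¹)^ℓ`; `A` encodes `S ⊗ 1`. -/
theorem stmt9_general {m : ℕ}
    (U : EuclideanSpace ℂ (Fin m) →L[ℂ] EuclideanSpace ℂ (Fin m))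
    (x : Fin m → EuclideanSpace ℂ (Fin m)) (hx : Orthonormal ℂ x)
    (γ : Fin m → ℂ) (hUx : ∀ i, U (x i) = γ i • x i) (hγ : Function.Injective γ)
    (A T : EnvSpace m →L[ℂ] EnvSpace m)
    (hA : A ∈ unitary (EnvSpace m →L[ℂ] EnvSpace m))
    (B : unitary (EnvSpace m →L[ℂ] EnvSpace m))
    (hAact : ∀ (ℓ : ℤ) (w : EuclideanSpace ℂ (Fin m)),
      A (lp.single 2 ℓ w) = lp.single 2 (ℓ - 1) w)
    (hBact : ∀ (ℓ : ℤ) (w : EuclideanSpace ℂ (Fin m)),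
      (B : EnvSpace m →L[ℂ] EnvSpace m) (lp.single 2 ℓ w) = lp.single 2 (ℓ - 1) (U w))
    (hTA : Commute T A) (hTB : Commute T (B : EnvSpace m →L[ℂ] EnvSpace m))
    (i : Fin m) (k : ℤ) :
    HasSum
      (fun ℓ : ℤ =>
        (inner (𝕜 := ℂ) (lp.single 2 (0:ℤ) (x i) : EnvSpace m)
            (T (((B ^ ℓ : unitary (EnvSpace m →L[ℂ] EnvSpace m)) :
                EnvSpace m →L[ℂ] EnvSpace m) (lp.single 2 0 (x i))))) •
          (((B⁻¹ ^ ℓ : unitary (EnvSpace m →L[ℂ] EnvSpace m)) :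
              EnvSpace m →L[ℂ] EnvSpace m) (lp.single 2 k (x i))))
      (T (lp.single 2 k (x i))) := by
  let δ : ℤ → EuclideanSpace ℂ (Fin m) → EnvSpace m := fun q w => lp.single 2 q w
  have hAδ (w) : ∀ q, A (δ q w) = δ (q - 1) w := (hAact · w)
  have hBδ (j) : ∀ q, (B : EnvSpace m →L[ℂ] EnvSpace m) (δ q (x j)) = γ j • δ (q - 1) (x j) :=
    fun q => by simp only [δ, hBact, hUx, lp.single_smul]
  have hγ_norm (j) : ‖γ j‖ = 1 :=
    norm_eq_one_of_unitary_apply_eq_smul B (hBδ j 0) (by simp [δ])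
      (norm_ne_zero_iff.mp (by simp [δ, hx.1 j]))
  set v := T (δ k (x i))
  have hv (p) : v p = ⟪x i, v p⟫_ℂ • x i := by
    refine hx.eq_inner_smul_of_forall_ne_inner_eq_zero (by simp) fun j hji => ?_
    refine (lp.inner_single_left (𝕜 := ℂ) p (x j) v).symm.trans ?_
    exact inner_apply_eq_zero_of_commute_unitary T ⟨A, hA⟩ B hTA hTB (hAδ _) (hAδ _)
      (hγ_norm j) (hγ.ne hji.symm) (hBδ i) (hBδ j) p k
  have hsum := (Equiv.addLeft k).hasSum_iff.mpr (lp.hasSum_single ENNReal.ofNat_ne_top v)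
  convert hsum using 2 with ℓ
  have hγ_ne : γ i ≠ 0 := norm_ne_zero_iff.mp (hγ_norm i ▸ one_ne_zero)
  have hBℓ := unitary_zpow_apply_of_apply_eq_smul B hγ_ne (hBδ i)
  have htrans := inner_apply_add_eq_of_commute_unitary T ⟨A, hA⟩ hTA (hAδ (x i)) (hAδ (x i))
    0 (-ℓ) (k + ℓ)
  simp only [δ, zero_add, neg_add_cancel_comm_assoc] at hBℓ htrans
  rw [inv_zpow', hBℓ, hBℓ, map_smul, inner_smul_right, smul_smul, ← lp.single_smul,
    sub_neg_eq_add, zero_sub, ← htrans, lp.inner_single_left, mul_right_comm,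
    ← zpow_add₀ hγ_ne, add_neg_cancel, zpow_zero, one_mul]
  exact congrArg (lp.single 2 (k + ℓ)) (hv (k + ℓ)).symm

/-- For `Σ` bounded on `ℓ²(ℤ) ⊗ ℂ^m` commuting with `S ⊗ U` and
`S ⊗ 1` (with `U` unitary with simple spectrum), one has, for every `k ∈ ℤ`,
`Σ(δ_k ⊗ xᵢ) = Σ_{ℓ∈ℤ} ⟨δ₀ ⊗ xᵢ, Σ(S⊗U)^ℓ(δ₀ ⊗ xᵢ)⟩ (S*⊗U*)^ℓ (δ_k ⊗ xᵢ)`,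
the sum converging in `ℓ²(ℤ) ⊗ ℂ^m`. Here `B` encodes `S ⊗ U` (as an element of
the unitary group, so that `ℤ`-indexed powers make sense, with
`(S* ⊗ U*)^ℓ = (B⁻¹)^ℓ`) and `A` encodes `S ⊗ 1`. -/
theorem stmt9 {m : ℕ}
    (U : EuclideanSpace ℂ (Fin m) →L[ℂ] EuclideanSpace ℂ (Fin m))
    (hU : U ∈ unitary (EuclideanSpace ℂ (Fin m) →L[ℂ] EuclideanSpace ℂ (Fin m)))
    (x : Fin m → EuclideanSpace ℂ (Fin m)) (hx : Orthonormal ℂ x)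
    (γ : Fin m → ℂ) (hUx : ∀ i, U (x i) = γ i • x i) (hγ : Function.Injective γ)
    (A T : EnvSpace m →L[ℂ] EnvSpace m)
    (hA : A ∈ unitary (EnvSpace m →L[ℂ] EnvSpace m))
    (B : unitary (EnvSpace m →L[ℂ] EnvSpace m))
    (hAact : ∀ (ℓ : ℤ) (w : EuclideanSpace ℂ (Fin m)),
      A (lp.single 2 ℓ w) = lp.single 2 (ℓ - 1) w)
    (hBact : ∀ (ℓ : ℤ) (w : EuclideanSpace ℂ (Fin m)),
      (B : EnvSpace m →L[ℂ] EnvSpace m) (lp.single 2 ℓ w) = lp.single 2 (ℓ - 1) (U w))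
    (hTA : Commute T A) (hTB : Commute T (B : EnvSpace m →L[ℂ] EnvSpace m))
    (i : Fin m) (k : ℤ) :
    HasSum
      (fun ℓ : ℤ =>
        (inner (𝕜 := ℂ) (lp.single 2 (0:ℤ) (x i) : EnvSpace m)
            (T (((B ^ ℓ : unitary (EnvSpace m →L[ℂ] EnvSpace m)) :
                EnvSpace m →L[ℂ] EnvSpace m) (lp.single 2 0 (x i))))) •
          (((B⁻¹ ^ ℓ : unitary (EnvSpace m →L[ℂ] EnvSpace m)) :
              EnvSpace m →L[ℂ] EnvSpace m) (lp.single 2 k (x i))))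
      (T (lp.single 2 k (x i))) :=
  stmt9_general U x hx γ hUx hγ A T hA B hAact hBact hTA hTB i k
end
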